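/- arXiv:2211.14436 — 6 statements merged into one kernel-verified Lean document; each statement's English description precedes it below -/
import Mathlib

section
/- Let k_a, k_d, M_max, w, T > 0 and let M, u : [0,T] → ℝ be C¹ functions satisfying u̇(t) = (k_a/M_max)·u(t)·M(t) − (k_d/w²)·M(t)² on [0,T] with u(T) = 0. If M(t) > 0 for all t ∈ [0,T], then u(t) ≥ 0 for all t ∈ [0,T]. -/
open Set

/-- Let `k_a, k_d, M_max, w, T > 0` and `M, u : [0,T] → ℝ` be C¹
functions satisfying the co-state equation
`u̇ = (k_a/M_max)·u·M − (k_d/w²)·M²` on `[0,T]` with `u(T) = 0`.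
If `M(t) > 0` for all `t ∈ [0,T]`, then `u(t) ≥ 0` for all `t ∈ [0,T]`. -/
theorem amyloid_costate_nonneg
    (ka kd Mmax w T : ℝ) (M u : ℝ → ℝ)
    (hka : 0 < ka) (hkd : 0 < kd) (hMmax : 0 < Mmax) (hw : 0 < w) (hT : 0 < T)
    (hM : ContinuousOn M (Icc 0 T))
    (hODE : ∀ t ∈ Icc (0:ℝ) T,
      HasDerivAt u (ka / Mmax * u t * M t - kd / w ^ 2 * (M t) ^ 2) t)
    (huT : u T = 0)
    (hMpos : ∀ t ∈ Icc (0:ℝ) T, 0 < M t) :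
    ∀ t ∈ Icc (0:ℝ) T, 0 ≤ u t := by
  have hproj : Continuous fun t : ℝ => min (max t 0) T := by continuity
  have hmem : ∀ t : ℝ, min (max t 0) T ∈ Icc (0:ℝ) T := fun t =>
    ⟨le_min (le_max_right _ _) hT.le, min_le_right _ _⟩
  set A : ℝ → ℝ := fun t => ka / Mmax * M (min (max t 0) T) with hA
  have hAc : Continuous A := continuous_const.mul (hM.comp_continuous hproj hmem)
  have hAeq : ∀ t ∈ Icc (0:ℝ) T, A t = ka / Mmax * M t := by
    intro t ht
    simp [hA, max_eq_left ht.1, min_eq_left ht.2]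
  set F : ℝ → ℝ := fun t => ∫ s in (0:ℝ)..t, A s with hF
  have hFd : ∀ t : ℝ, HasDerivAt F (A t) t := fun t =>
    (hAc.integral_hasStrictDerivAt 0 t).hasDerivAt
  set g : ℝ → ℝ := fun t => u t * Real.exp (-(F t)) with hg
  have hgd : ∀ t ∈ Icc (0:ℝ) T,
      HasDerivAt g (-(kd / w ^ 2 * (M t) ^ 2 * Real.exp (-(F t)))) t := by
    intro t ht
    have h1 := (hODE t ht).mul ((hFd t).neg.exp)
    have : (ka / Mmax * u t * M t - kd / w ^ 2 * (M t) ^ 2) * Real.exp (-(F t)) +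
        u t * (Real.exp (-(F t)) * -A t) =
        -(kd / w ^ 2 * (M t) ^ 2 * Real.exp (-(F t))) := by
      rw [hAeq t ht]; ring
    rw [← this]; exact h1
  have hgc : ContinuousOn g (Icc 0 T) := fun t ht =>
    ((hgd t ht).continuousAt).continuousWithinAt
  have hanti : StrictAntiOn g (Icc 0 T) := by
    apply strictAntiOn_of_deriv_neg (convex_Icc 0 T) hgc
    intro x hx
    rw [interior_Icc] at hx
    have hx' : x ∈ Icc (0:ℝ) T := ⟨hx.1.le, hx.2.le⟩
    rw [(hgd x hx').deriv]
    have := hMpos x hx'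
    have : 0 < kd / w ^ 2 * (M x) ^ 2 * Real.exp (-(F x)) := by positivity
    linarith
  intro t ht
  rcases eq_or_lt_of_le ht.2 with rfl | hlt
  · simp [huT]
  · have hgt : g T < g t := hanti ht (right_mem_Icc.2 hT.le) hlt
    have hgT : g T = 0 := by simp [hg, huT]
    have hpos : 0 < u t * Real.exp (-(F t)) := by
      have := hgt; rw [hgT] at this; simpa [hg] using this
    nlinarith [Real.exp_pos (-(F t)), hpos]
end

section
/- Let k_a, k_d, M_max, w, T > 0 and let M, u : [0,T] → ℝ be C¹ functions satisfying the coupled system Ṁ = k_a·M·(1 − M/M_max) − k_d·u·M and u̇ = (k_a/M_max)·u·M − (k_d/w²)·M² on [0,T]. Then the quantity E(t) = M(t)² − w²·u(t)² − (2·k_a·w²/(k_d·M_max))·M(t)·u(t) + (2·k_a·w²/k_d)·u(t) is constant on [0,T]. -/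
open Set

/-- Let `k_a, k_d, M_max, w, T > 0` and `M, u : [0,T] → ℝ` be C¹
solutions of the coupled system `Ṁ = k_a·M·(1 − M/M_max) − k_d·u·M` and
`u̇ = (k_a/M_max)·u·M − (k_d/w²)·M²` on `[0,T]`.  Then the quantity
`E(t) = M² − w²·u² − (2·k_a·w²/(k_d·M_max))·M·u + (2·k_a·w²/k_d)·u`
is constant on `[0,T]`. -/
theorem amyloid_first_integral
    (ka kd Mmax w T : ℝ) (M u : ℝ → ℝ)
    (hka : 0 < ka) (hkd : 0 < kd) (hMmax : 0 < Mmax) (hw : 0 < w) (hT : 0 < T)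
    (hODEM : ∀ t ∈ Icc (0:ℝ) T,
      HasDerivAt M (ka * M t * (1 - M t / Mmax) - kd * u t * M t) t)
    (hODEu : ∀ t ∈ Icc (0:ℝ) T,
      HasDerivAt u (ka / Mmax * u t * M t - kd / w ^ 2 * (M t) ^ 2) t) :
    ∀ s ∈ Icc (0:ℝ) T, ∀ t ∈ Icc (0:ℝ) T,
      (M s) ^ 2 - w ^ 2 * (u s) ^ 2 - 2 * ka * w ^ 2 / (kd * Mmax) * (M s * u s)
          + 2 * ka * w ^ 2 / kd * u s
        = (M t) ^ 2 - w ^ 2 * (u t) ^ 2 - 2 * ka * w ^ 2 / (kd * Mmax) * (M t * u t)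
          + 2 * ka * w ^ 2 / kd * u t := by
  set E : ℝ → ℝ := fun t =>
    (M t) ^ 2 - w ^ 2 * (u t) ^ 2 - 2 * ka * w ^ 2 / (kd * Mmax) * (M t * u t)
      + 2 * ka * w ^ 2 * u t / kd with hE
  have hderiv : ∀ t ∈ Icc (0:ℝ) T, HasDerivAt E 0 t := by
    intro t ht
    have hM := hODEM t ht
    have hu := hODEu t ht
    have : HasDerivAt E
        (2 * M t ^ 1 * (ka * M t * (1 - M t / Mmax) - kd * u t * M t)
          - w ^ 2 * (2 * u t ^ 1 * (ka / Mmax * u t * M t - kd / w ^ 2 * (M t) ^ 2))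
          - 2 * ka * w ^ 2 / (kd * Mmax) *
            ((ka * M t * (1 - M t / Mmax) - kd * u t * M t) * u t
              + M t * (ka / Mmax * u t * M t - kd / w ^ 2 * (M t) ^ 2))
          + 2 * ka * w ^ 2 * (ka / Mmax * u t * M t - kd / w ^ 2 * (M t) ^ 2) / kd) t := by
      exact (((hM.pow 2).sub (((hu.pow 2)).const_mul (w ^ 2))).sub
        (((hM.mul hu)).const_mul (2 * ka * w ^ 2 / (kd * Mmax)))).add
        ((hu.const_mul (2 * ka * w ^ 2)).div_const kd)
    convert this using 1
    field_simp
    ring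
  have key : ∀ x ∈ Icc (0:ℝ) T, E x = E 0 := by
    intro x hx
    apply constant_of_has_deriv_right_zero
      (fun y hy => ((hderiv y hy).continuousAt.continuousWithinAt))
      (fun y hy => ((hderiv y (Ico_subset_Icc_self hy)).hasDerivWithinAt)) x hx
  intro s hs t ht
  have h1 := key s hs
  have h2 := key t ht
  have : E s = E t := by rw [h1, h2]
  simpa [hE, mul_comm, mul_div_assoc] using this
end

section
/- Let k_a, k_d, w > 0, C₁ ≠ 0, C₂ ∈ ℝ, and let I be an interval on which cos(−k_d·C₁·t + C₂) ≠ 0. Then the functions u(t) = C₁·tan(−k_d·C₁·t + C₂) + k_a/k_d and M(t) = w·C₁·sec(−k_d·C₁·t + C₂) satisfy the linearized optimal-control system Ṁ(t) = k_a·M(t) − k_d·u(t)·M(t) and u̇(t) = −(k_d/w²)·M(t)² for all t ∈ I. -/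
open Set

/-- Let `k_a, k_d, w > 0`, `C₁ ≠ 0`, `C₂ ∈ ℝ`, and let `I` be an
interval on which `cos(−k_d·C₁·t + C2) ≠ 0`.  Then
`u(t) = C₁·tan(−k_d·C₁·t + C₂) + k_a/k_d` and `M(t) = w·C₁·sec(−k_d·C₁·t + C₂)`
satisfy the linearized optimal-control system `Ṁ = k_a·M − k_d·u·M` and
`u̇ = −(k_d/w²)·M²` for all `t ∈ I`. -/
theorem amyloid_linearized_explicit_solution
    (ka kd w C1 C2 : ℝ) (I : Set ℝ) (M u : ℝ → ℝ)
    (hka : 0 < ka) (hkd : 0 < kd) (hw : 0 < w) (hC1 : C1 ≠ 0)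
    (hI : I.OrdConnected)
    (hcos : ∀ t ∈ I, Real.cos (-(kd * C1 * t) + C2) ≠ 0)
    (hu : ∀ t, u t = C1 * Real.tan (-(kd * C1 * t) + C2) + ka / kd)
    (hM : ∀ t, M t = w * C1 * (Real.cos (-(kd * C1 * t) + C2))⁻¹) :
    ∀ t ∈ I,
      HasDerivAt M (ka * M t - kd * u t * M t) t ∧
      HasDerivAt u (-(kd / w ^ 2) * (M t) ^ 2) t := by
  intro t ht
  have hc := hcos t ht
  set θ : ℝ → ℝ := fun s => -(kd * C1 * s) + C2 with hθdef
  have hθ : HasDerivAt θ (-(kd * C1)) t := by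
    simpa [hθdef] using (((hasDerivAt_id t).const_mul (kd * C1)).neg).add_const C2
  have hcosθ : HasDerivAt (fun s => Real.cos (θ s)) (-Real.sin (θ t) * -(kd * C1)) t :=
    (Real.hasDerivAt_cos (θ t)).comp t hθ
  have hMeq : M = fun s => w * C1 * (Real.cos (θ s))⁻¹ := funext hM
  have hueq : u = fun s => C1 * Real.tan (θ s) + ka / kd := funext hu
  constructor
  · have hinv : HasDerivAt (fun s => (Real.cos (θ s))⁻¹)
        (-(-Real.sin (θ t) * -(kd * C1)) / (Real.cos (θ t)) ^ 2) t := hcosθ.inv hc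
    have := hinv.const_mul (w * C1)
    rw [hMeq]
    refine this.congr_deriv ?_
    simp only [hu, Real.tan_eq_sin_div_cos, hθdef]
    field_simp
    ring
  · have htan : HasDerivAt (fun s => Real.tan (θ s)) (1 / (Real.cos (θ t)) ^ 2 * -(kd * C1)) t :=
      (Real.hasDerivAt_tan (x := θ t) hc).comp t hθ
    have := (htan.const_mul C1).add_const (ka / kd)
    rw [hueq]
    refine this.congr_deriv ?_
    simp only [hM, hθdef]
    field_simp
end

section
/- Let k_a, k_d, w, T, m0 > 0 and k > 0, and let M, u : [0,T] → ℝ be C¹ functions satisfying the linearized boundary value problem Ṁ = k_a·M − k_d·u·M, u̇ = −(k_d/w²)·M², M(0) = m0, u(T) = 0. Then the pair (k·M, u) satisfies the same boundary value problem with weight k·w and initial value k·m0 (and the same k_a, k_d, T); that is, if both w and m0 are enlarged k times, the optimal control u* is unchanged while the optimal state M* is enlarged k times. -/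
open Set

/-- Let `k_a, k_d, w, T, m0 > 0` and `k > 0`, and let
`M, u : [0,T] → ℝ` be C¹ solutions of the linearized boundary value problem
`Ṁ = k_a·M − k_d·u·M`, `u̇ = −(k_d/w²)·M²`, `M(0) = m0`, `u(T) = 0`.
Then `(k·M, u)` solves the same boundary value problem with weight `k·w` and
initial value `k·m0` (same `k_a, k_d, T`): if both `w` and `m0` are enlarged
`k` times, the optimal control is unchanged while the optimal state is enlarged
`k` times. -/
theorem amyloid_scaling_w_m0
    (ka kd w T m0 k : ℝ) (M u : ℝ → ℝ)
    (hka : 0 < ka) (hkd : 0 < kd) (hw : 0 < w) (hT : 0 < T) (hm0 : 0 < m0)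
    (hk : 0 < k)
    (hODEM : ∀ t ∈ Icc (0:ℝ) T, HasDerivAt M (ka * M t - kd * u t * M t) t)
    (hODEu : ∀ t ∈ Icc (0:ℝ) T, HasDerivAt u (-(kd / w ^ 2) * (M t) ^ 2) t)
    (hM0 : M 0 = m0) (huT : u T = 0) :
    (∀ t ∈ Icc (0:ℝ) T,
      HasDerivAt (fun s => k * M s)
        (ka * (k * M t) - kd * u t * (k * M t)) t) ∧
    (∀ t ∈ Icc (0:ℝ) T,
      HasDerivAt u (-(kd / (k * w) ^ 2) * (k * M t) ^ 2) t) ∧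
    k * M 0 = k * m0 ∧ u T = 0 := by
  refine ⟨fun t ht => ?_, fun t ht => ?_, by rw [hM0], huT⟩
  · have := (hODEM t ht).const_mul k
    rw [show ka * (k * M t) - kd * u t * (k * M t) = k * (ka * M t - kd * u t * M t) by ring]; exact this
  · have := hODEu t ht
    convert this using 1
    field_simp
end

section
/- Let k_a, M_max, T > 0 and let M, N : [0,T] → ℝ be C¹ functions with M(t) > 0 for all t ∈ [0,T], satisfying Ṅ(t) = (k_a·N(t)/M_max + 1)·M(t) on [0,T], N(T) = 0, and N(t) > −M_max/k_a for all t ∈ [0,T]. Then N is strictly increasing on [0,T] and N(t) < 0 for all t ∈ [0,T); consequently, for any w, k_d > 0, there is at most one t ∈ [0,T] with N(t) = −w/k_d. -/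
open Set

/-- Let `k_a, M_max, T > 0` and let `M, N : [0,T] → ℝ` be C¹ with
`M > 0` on `[0,T]`, satisfying `Ṅ = (k_a·N/M_max + 1)·M` on `[0,T]`, `N(T) = 0`, and
`N > −M_max/k_a` on `[0,T]`.  Then `N` is strictly increasing on `[0,T]` and `N < 0`
on `[0,T)`; consequently, for any `w, k_d > 0` there is at most one `t ∈ [0,T]` with
`N(t) = −w/k_d`. -/
theorem amyloid_L1_switch_time_unique
    (ka Mmax T : ℝ) (M N : ℝ → ℝ)
    (hka : 0 < ka) (hMmax : 0 < Mmax) (hT : 0 < T)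
    (hMpos : ∀ t ∈ Icc (0:ℝ) T, 0 < M t)
    (hMcont : ContinuousOn M (Icc 0 T))
    (hODEN : ∀ t ∈ Icc (0:ℝ) T,
      HasDerivAt N ((ka * N t / Mmax + 1) * M t) t)
    (hNT : N T = 0)
    (hNlb : ∀ t ∈ Icc (0:ℝ) T, N t > -Mmax / ka) :
    StrictMonoOn N (Icc 0 T) ∧
    (∀ t ∈ Ico (0:ℝ) T, N t < 0) ∧
    (∀ w kd : ℝ, 0 < w → 0 < kd →
      ∀ s ∈ Icc (0:ℝ) T, ∀ t ∈ Icc (0:ℝ) T,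
        N s = -w / kd → N t = -w / kd → s = t) := by
  have hpos : ∀ t ∈ Icc (0:ℝ) T, 0 < (ka * N t / Mmax + 1) * M t := by
    intro t ht
    have hM := hMpos t ht
    have hlb := hNlb t ht
    have h1 : 0 < ka * N t / Mmax + 1 := by
      have h2 : ka * N t > -Mmax := by
        have := (div_lt_iff₀ hka).mp (by linarith [hNlb t ht] : -Mmax / ka < N t)
        nlinarith
      have : -1 < ka * N t / Mmax := by
        rw [lt_div_iff₀ hMmax]; nlinarith
      linarith
    exact mul_pos h1 hM
  have hNcont : ContinuousOn N (Icc 0 T) := fun t ht =>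
    (hODEN t ht).continuousAt.continuousWithinAt
  have hmono : StrictMonoOn N (Icc 0 T) := by
    apply strictMonoOn_of_deriv_pos (convex_Icc 0 T) hNcont
    intro x hx
    rw [interior_Icc] at hx
    have hx' : x ∈ Icc (0:ℝ) T := ⟨le_of_lt hx.1, le_of_lt hx.2⟩
    rw [(hODEN x hx').deriv]
    exact hpos x hx'
  refine ⟨hmono, ?_, ?_⟩
  · intro t ht
    have : N t < N T := hmono ⟨ht.1, le_of_lt ht.2⟩ (right_mem_Icc.mpr (le_of_lt hT)) ht.2
    linarith [hNT ▸ this]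
  · intro w kd hw hkd s hs t ht hNs hNt
    exact hmono.injOn hs ht (hNs.trans hNt.symm)
end

section
/- Let k_a, k_d, M_max, w, T > 0 with w/k_d > M_max/k_a, and let N : [0,T] → ℝ satisfy N(t) > −M_max/k_a for all t ∈ [0,T]. Then k_d·N(t) + w > 0 for all t ∈ [0,T]; hence the Pontryagin bang-bang switching function −(k_d·N(t) + w) is strictly negative throughout, so the bang-bang optimal control in the L¹ problem equals 0 identically on [0,T] (an inhibitor that is too toxic and ineffective should not be used at all). -/
open Set

/-- Let `k_a, k_d, M_max, w, T > 0` with `w/k_d > M_max/k_a`, and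
let `N : [0,T] → ℝ` satisfy `N(t) > −M_max/k_a` on `[0,T]`.  Then
`k_d·N(t) + w > 0` on `[0,T]`; hence the Pontryagin bang-bang switching function
`−(k_d·N(t) + w)` is strictly negative throughout, so a bang-bang optimal control
(equal to `u_max` where the switching function is positive and `0` where it is
negative) equals `0` identically on `[0,T]`. -/
theorem amyloid_L1_toxic_inhibitor_never_used
    (ka kd Mmax w T umax : ℝ) (N u : ℝ → ℝ)
    (hka : 0 < ka) (hkd : 0 < kd) (hMmax : 0 < Mmax) (hw : 0 < w) (hT : 0 < T)
    (htoxic : w / kd > Mmax / ka)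
    (hNlb : ∀ t ∈ Icc (0:ℝ) T, N t > -Mmax / ka)
    (hbang : ∀ t ∈ Icc (0:ℝ) T,
      (0 < -(kd * N t + w) → u t = umax) ∧ (-(kd * N t + w) < 0 → u t = 0)) :
    (∀ t ∈ Icc (0:ℝ) T, 0 < kd * N t + w) ∧
    (∀ t ∈ Icc (0:ℝ) T, u t = 0) := by
  have key : ∀ t ∈ Icc (0:ℝ) T, 0 < kd * N t + w := by
    intro t ht
    have h1 : N t > -Mmax / ka := hNlb t ht
    have h2 : kd * N t > kd * (-Mmax / ka) := by
      exact (mul_lt_mul_iff_right₀ hkd).mpr h1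
    have h3 : kd * (Mmax / ka) < kd * (w / kd) := by
      exact (mul_lt_mul_iff_right₀ hkd).mpr htoxic
    have h4 : kd * (w / kd) = w := by field_simp
    have h5 : kd * (-Mmax / ka) = -(kd * (Mmax / ka)) := by ring
    linarith
  refine ⟨key, fun t ht => (hbang t ht).2 (by linarith [key t ht])⟩
end
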